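/- arXiv:1511.09238 — 4 statements merged into one kernel-verified Lean document; each statement's English description precedes it below -/
import Mathlib

section
/- Let G be a totally disconnected locally compact Hausdorff topological group and μ a left-invariant Haar measure on G. Then for every g ∈ G and every compact open subgroup U of G, one has s(g) · μ(U) = s(g⁻¹) · μ(Ug⁻¹); equivalently, s(g)/s(g⁻¹) = Δ(g) where Δ is the modular function. -/
open MeasureTheory Pointwise ENNReal

variable {G : Type*}

/-- The conjugate subgroup `gUg⁻¹`. -/
def conjSubgroup [Group G] (g : G) (U : Subgroup G) : Subgroup G :=
  U.map (MulAut.conj g).toMonoidHom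

/-- A subgroup is compact open if its carrier set is compact and open. -/
def Subgroup.IsCompactOpen [Group G] [TopologicalSpace G] (U : Subgroup G) : Prop :=
  IsCompact (U : Set G) ∧ IsOpen (U : Set G)

/-- The scale `s(g) = min_U [gUg⁻¹ : gUg⁻¹ ∩ U]`, minimum over compact open subgroups. -/
noncomputable def scale [Group G] [TopologicalSpace G] (g : G) : ℕ :=
  sInf { n : ℕ | ∃ U : Subgroup G, U.IsCompactOpen ∧ n = U.relIndex (conjSubgroup g U) }

/-! For a compact open subgroup `V` and `W = V ⊓ gVg⁻¹`, counting cosets of `W` gives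
`[gVg⁻¹ : W] μ W = μ (gVg⁻¹) = μ (Vg⁻¹) = Δ(g) μ V = Δ(g) [V : W] μ W`, and conjugating by `g⁻¹`
turns `[V : W]` into `[V : V ⊓ g⁻¹Vg]`, the index minimised by `s(g⁻¹)`. Choosing `V` optimal for
`g⁻¹` gives `s(g) ≤ Δ(g) s(g⁻¹)`; the same inequality for `g⁻¹` and `Δ(g) Δ(g⁻¹) = 1` give
`s(g) = Δ(g) s(g⁻¹)`, and `μ (Ug⁻¹) = Δ(g) μ U` finishes the proof. Compact open subgroups exist
by van Dantzig's theorem, so the minima are attained. -/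

open MeasureTheory.Measure

section VanDantzig

variable [Group G] [TopologicalSpace G] [IsTopologicalGroup G]

theorem Subgroup.IsCompactOpen.isCompact_closure {U : Subgroup G} (hU : U.IsCompactOpen) :
    IsCompact (_root_.closure (U : Set G)) := by
  rw [(U.isClosed_of_isOpen hU.2).closure_eq]
  exact hU.1

theorem exists_isCompactOpen_subgroup_subset {W : Set G} (hWc : IsCompact W) (hWo : IsOpen W)
    (hW1 : (1 : G) ∈ W) : ∃ U : Subgroup G, U.IsCompactOpen ∧ (U : Set G) ⊆ W := by
  obtain ⟨V, hV, hWV⟩ := compact_open_separated_mul_right hWc hWo subset_rfl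
  set U := Subgroup.closure (V ∩ V⁻¹)
  have hWU : ∀ x ∈ U, ∀ w ∈ W, w * x ∈ W := by
    intro x hx
    induction hx using Subgroup.closure_induction'' with
    | mem x hx => exact fun w hw => hWV (Set.mul_mem_mul hw hx.1)
    | inv_mem x hx => exact fun w hw => hWV (Set.mul_mem_mul hw hx.2)
    | one => simp
    | mul x y _ _ hx hy => exact fun w hw => by simpa [mul_assoc] using hy _ (hx w hw)
  have hUW : (U : Set G) ⊆ W := fun x hx => by simpa using hWU x hx 1 hW1
  have hUo : IsOpen (U : Set G) :=
    U.isOpen_of_mem_nhds (Filter.mem_of_superset (Filter.inter_mem hV (inv_mem_nhds_one G hV))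
      Subgroup.subset_closure)
  exact ⟨U, ⟨hWc.of_isClosed_subset (U.isClosed_of_isOpen hUo) hUW, hUo⟩, hUW⟩

theorem exists_isCompactOpen_subgroup [LocallyCompactSpace G] [T2Space G]
    [TotallyDisconnectedSpace G] : ∃ U : Subgroup G, U.IsCompactOpen := by
  obtain ⟨K, hKc, hK1⟩ := exists_compact_mem_nhds (1 : G)
  obtain ⟨W, hW, hW1, hWK⟩ := loc_compact_Haus_tot_disc_of_zero_dim.mem_nhds_iff.mp hK1
  obtain ⟨U, hU, -⟩ :=
    exists_isCompactOpen_subgroup_subset (hKc.of_isClosed_subset hW.1 hWK) hW.2 hW1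
  exact ⟨U, hU⟩

end VanDantzig

theorem Subgroup.relIndex_ne_zero_of_isOpen_of_isCompact [Group G] [TopologicalSpace G]
    [IsTopologicalGroup G] {H K : Subgroup G} (hH : IsOpen (H : Set G))
    (hK : IsCompact (K : Set G)) : H.relIndex K ≠ 0 := by
  have : CompactSpace K := isCompact_iff_compactSpace.mp hK
  have := Subgroup.quotient_finite_of_isOpen (H.subgroupOf K) (Subgroup.subgroupOf_isOpen K H hH)
  exact Subgroup.index_ne_zero_of_finite

instance Subgroup.measurableMul [Group G] [MeasurableSpace G] [MeasurableMul G]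
    (K : Subgroup G) : MeasurableMul K where
  measurable_const_mul k := ((measurable_const_mul (k : G)).comp measurable_subtype_coe).subtype_mk
  measurable_mul_const k := ((measurable_mul_const (k : G)).comp measurable_subtype_coe).subtype_mk

theorem Subgroup.relIndex_mul_measure_inf [Group G] [MeasurableSpace G] [MeasurableMul G]
    (H K : Subgroup G) [H.IsFiniteRelIndex K] (hH : MeasurableSet (H : Set G))
    (hK : MeasurableSet (K : Set G)) (μ : Measure G) [μ.IsMulLeftInvariant] :
    H.relIndex K * μ (H ⊓ K : Subgroup G) = μ K := by
  have hemb : MeasurableEmbedding K.subtype := MeasurableEmbedding.subtype_coe hK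
  have := IsMulLeftInvariant.comap μ hemb
  have hindex :=
    Subgroup.index_mul_measure (H.subgroupOf K) (measurable_subtype_coe hH) (μ.comap K.subtype)
  rwa [hemb.comap_apply, hemb.comap_apply, Subgroup.coe_subtype, Set.image_univ,
    Subtype.range_coe, Subgroup.coe_subgroupOf, Subgroup.coe_subtype,
    Set.image_preimage_eq_inter_range, Subtype.range_coe, ← Subgroup.coe_inf] at hindex

theorem measure_image_mul_right_eq_modularCharacter_mul [Group G] [TopologicalSpace G]
    [IsTopologicalGroup G] [LocallyCompactSpace G] [MeasurableSpace G] [BorelSpace G]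
    (μ : Measure G) [μ.IsHaarMeasure] (g : G) {s : Set G} (hs : IsCompact (closure s)) :
    μ ((fun x => x * g⁻¹) '' s) = modularCharacter g * μ s := by
  calc μ ((fun x => x * g⁻¹) '' s) = μ.map (· * g) s := by
        rw [Set.image_mul_right, inv_inv, ← MeasurableEquiv.coe_mulRight,
          MeasurableEquiv.map_apply]
    _ = modularCharacter g * μ s := by
        rw [measure_isMulInvariant_eq_smul_of_isCompact_closure _ μ hs,
          ← modularCharacterFun_eq_haarScalarFactor]
        rfl

section Conjugation

variable [Group G]

theorem conjSubgroup_eq_smul (g : G) (U : Subgroup G) : conjSubgroup g U = MulAut.conj g • U :=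
  rfl

theorem conjSubgroup_conjSubgroup_inv (g : G) (U : Subgroup G) :
    conjSubgroup g (conjSubgroup g⁻¹ U) = U := by
  rw [conjSubgroup_eq_smul, conjSubgroup_eq_smul, smul_smul, ← map_mul, mul_inv_cancel, map_one,
    one_smul]

theorem conjSubgroup_relIndex_eq_relIndex_conjSubgroup_inv (g : G) (U : Subgroup G) :
    (conjSubgroup g U).relIndex U = U.relIndex (conjSubgroup g⁻¹ U) := by
  nth_rw 2 [← conjSubgroup_conjSubgroup_inv g U]
  exact Subgroup.relIndex_pointwise_smul (MulAut.conj g) _ _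

theorem coe_conjSubgroup (g : G) (U : Subgroup G) :
    (conjSubgroup g U : Set G) = g • ((fun x => x * g⁻¹) '' (U : Set G)) := by
  rw [← Set.image_smul, Set.image_image]
  exact Set.image_congr fun x _ => (mul_assoc g x g⁻¹)

theorem Subgroup.IsCompactOpen.conjSubgroup [TopologicalSpace G] [IsTopologicalGroup G] (g : G)
    {U : Subgroup G} (hU : U.IsCompactOpen) : (conjSubgroup g U).IsCompactOpen := by
  rw [Subgroup.IsCompactOpen, coe_conjSubgroup]
  exact ⟨(hU.1.image (continuous_mul_const _)).smul g, (isOpenMap_mul_right _ _ hU.2).smul g⟩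

end Conjugation

theorem scale_le_relIndex [Group G] [TopologicalSpace G] (g : G) {V : Subgroup G}
    (hV : V.IsCompactOpen) : scale g ≤ V.relIndex (conjSubgroup g V) :=
  Nat.sInf_le ⟨V, hV, rfl⟩

section Scale

variable [Group G] [TopologicalSpace G] [IsTopologicalGroup G] [LocallyCompactSpace G]

theorem relIndex_conjSubgroup_eq_modularCharacter_mul (g : G) {V : Subgroup G}
    (hV : V.IsCompactOpen) :
    (V.relIndex (conjSubgroup g V) : ℝ≥0∞) =
      modularCharacter g * V.relIndex (conjSubgroup g⁻¹ V) := by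
  borelize G
  set μ : Measure G := haar
  set C := conjSubgroup g V
  have hC : C.IsCompactOpen := hV.conjSubgroup g
  have : V.IsFiniteRelIndex C := ⟨Subgroup.relIndex_ne_zero_of_isOpen_of_isCompact hV.2 hC.1⟩
  have : C.IsFiniteRelIndex V := ⟨Subgroup.relIndex_ne_zero_of_isOpen_of_isCompact hC.2 hV.1⟩
  have hW0 : μ (V ⊓ C : Subgroup G) ≠ 0 := (hV.2.inter hC.2).measure_ne_zero μ ⟨1, (V ⊓ C).one_mem⟩
  have hWtop : μ (V ⊓ C : Subgroup G) ≠ ⊤ :=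
    (measure_mono (μ := μ) Set.inter_subset_left).trans_lt hV.1.measure_lt_top |>.ne
  have hμC : μ C = modularCharacter g * μ V := by
    rw [coe_conjSubgroup, measure_smul,
      measure_image_mul_right_eq_modularCharacter_mul μ g hV.isCompact_closure]
  have hVC := V.relIndex_mul_measure_inf C hV.2.measurableSet hC.2.measurableSet μ
  have hCV := C.relIndex_mul_measure_inf V hC.2.measurableSet hV.2.measurableSet μ
  rw [inf_comm, conjSubgroup_relIndex_eq_relIndex_conjSubgroup_inv] at hCV
  rw [← ENNReal.mul_left_inj hW0 hWtop, hVC, hμC, ← hCV, mul_assoc]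

variable [T2Space G] [TotallyDisconnectedSpace G]

theorem exists_scale_eq_relIndex (g : G) :
    ∃ V : Subgroup G, V.IsCompactOpen ∧ scale g = V.relIndex (conjSubgroup g V) := by
  obtain ⟨V, hV⟩ := exists_isCompactOpen_subgroup (G := G)
  have : {n | ∃ U : Subgroup G, U.IsCompactOpen ∧ n = U.relIndex (conjSubgroup g U)}.Nonempty :=
    ⟨_, V, hV, rfl⟩
  exact Nat.sInf_mem this

theorem scale_le_modularCharacter_mul_scale_inv (g : G) :
    (scale g : ℝ≥0∞) ≤ modularCharacter g * scale g⁻¹ := by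
  obtain ⟨V, hV, hscale⟩ := exists_scale_eq_relIndex g⁻¹
  calc (scale g : ℝ≥0∞) ≤ V.relIndex (conjSubgroup g V) := by
        exact_mod_cast scale_le_relIndex g hV
    _ = modularCharacter g * scale g⁻¹ := by
        rw [relIndex_conjSubgroup_eq_modularCharacter_mul g hV, hscale]

theorem scale_eq_modularCharacter_mul_scale_inv (g : G) :
    (scale g : ℝ≥0∞) = modularCharacter g * scale g⁻¹ := by
  refine le_antisymm (scale_le_modularCharacter_mul_scale_inv g) ?_
  calc (modularCharacter g : ℝ≥0∞) * scale g⁻¹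
      ≤ modularCharacter g * (modularCharacter g⁻¹ * scale g⁻¹⁻¹) :=
        mul_le_mul_right (scale_le_modularCharacter_mul_scale_inv g⁻¹) _
    _ = scale g := by
        rw [← mul_assoc, ← ENNReal.coe_mul, ← map_mul, mul_inv_cancel, map_one, ENNReal.coe_one,
          one_mul, inv_inv]

end Scale

/-- `s(g) · μ(U) = s(g⁻¹) · μ(Ug⁻¹)`, i.e. `s(g)/s(g⁻¹) = Δ(g)`. -/
theorem scale_ratio_eq_modular
    [Group G] [TopologicalSpace G] [IsTopologicalGroup G] [LocallyCompactSpace G] [T2Space G]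
    [TotallyDisconnectedSpace G] [MeasurableSpace G] [BorelSpace G]
    (μ : Measure G) [μ.IsHaarMeasure]
    (g : G) (U : Subgroup G) (hU : U.IsCompactOpen) :
    (scale g : ℝ≥0∞) * μ (U : Set G) =
      (scale g⁻¹ : ℝ≥0∞) * μ ((fun x => x * g⁻¹) '' (U : Set G)) := by
  rw [scale_eq_modularCharacter_mul_scale_inv g,
    measure_image_mul_right_eq_modularCharacter_mul μ g hU.isCompact_closure]
  ring
end

section
/- Let G be a totally disconnected locally compact Hausdorff topological group, g ∈ G, and U a compact open subgroup of G. Then s(g) = [gUg⁻¹ : gUg⁻¹ ∩ U] if and only if s(g⁻¹) = [g⁻¹Ug : g⁻¹Ug ∩ U]; that is, g and g⁻¹ have the same minimising subgroups. -/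
open MeasureTheory Pointwise

variable {G : Type*}

/-! The ratio `[gUg⁻¹ : gUg⁻¹ ∩ U] / [U : U ∩ gUg⁻¹]` is the modular function of `g`, independent
of the compact open subgroup `U`: both indices count cosets of a common small open subgroup, and
conjugation by `g` preserves such counts. Since `[g⁻¹Ug : g⁻¹Ug ∩ U] = [U : U ∩ gUg⁻¹]`, the index
functions of `g` and of `g⁻¹` are proportional on compact open subgroups, so they are minimised by
the same subgroups. -/

section Algebra

variable [Group G]

theorem Subgroup.relIndex_mul_relIndex_eq_of_le_inf {A B D : Subgroup G} (hD : D ≤ A ⊓ B) :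
    B.relIndex A * D.relIndex B = A.relIndex B * D.relIndex A := by
  have hA := relIndex_mul_relIndex D (A ⊓ B) A hD inf_le_left
  have hB := relIndex_mul_relIndex D (A ⊓ B) B hD inf_le_right
  rw [inf_relIndex_left] at hA
  rw [inf_relIndex_right] at hB
  rw [← hA, ← hB]
  ring

theorem relIndex_conjSubgroup (g : G) (H K : Subgroup G) :
    (conjSubgroup g H).relIndex (conjSubgroup g K) = H.relIndex K :=
  Subgroup.relIndex_map_map_of_injective H K (MulAut.conj g).injective

theorem conjSubgroup_conjSubgroup (g h : G) (U : Subgroup G) :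
    conjSubgroup g (conjSubgroup h U) = conjSubgroup (g * h) U := by
  simp only [conjSubgroup, Subgroup.map_map, map_mul]
  rfl

theorem conjSubgroup_one (U : Subgroup G) : conjSubgroup 1 U = U := by
  simp only [conjSubgroup, map_one]
  exact U.map_id

theorem relIndex_conjSubgroup_inv (g : G) (U : Subgroup G) :
    U.relIndex (conjSubgroup g⁻¹ U) = (conjSubgroup g U).relIndex U := by
  rw [← relIndex_conjSubgroup g, conjSubgroup_conjSubgroup, mul_inv_cancel, conjSubgroup_one]

/-- For compact open `A` and `B` this is `μ A / μ B`, for any Haar measure `μ`. -/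
noncomputable def indexRatio (A B : Subgroup G) : ℚ :=
  B.relIndex A / A.relIndex B

theorem indexRatio_eq_div_of_le_inf {A B D : Subgroup G} (hD : D ≤ A ⊓ B)
    (hDB : D.relIndex B ≠ 0) : indexRatio A B = D.relIndex A / D.relIndex B := by
  have hAB : A.relIndex B ≠ 0 :=
    ne_zero_of_dvd_ne_zero hDB (Subgroup.relIndex_dvd_of_le_left B (hD.trans inf_le_left))
  rw [indexRatio, div_eq_div_iff (by exact_mod_cast hAB) (by exact_mod_cast hDB), mul_comm (D.relIndex A : ℚ)]
  exact_mod_cast Subgroup.relIndex_mul_relIndex_eq_of_le_inf hD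

theorem indexRatio_conjSubgroup (g : G) (A B : Subgroup G) :
    indexRatio (conjSubgroup g A) (conjSubgroup g B) = indexRatio A B := by
  simp only [indexRatio, relIndex_conjSubgroup]

end Algebra

section Topology

variable [Group G] [TopologicalSpace G] [IsTopologicalGroup G]

theorem Subgroup.relIndex_ne_zero_of_isCompact_of_isOpen {A B : Subgroup G}
    (hA : IsCompact (A : Set G)) (hB : IsOpen (B : Set G)) : B.relIndex A ≠ 0 := by
  have : CompactSpace A := isCompact_iff_compactSpace.mp hA
  have : Finite (A ⧸ B.subgroupOf A) :=
    Subgroup.quotient_finite_of_isOpen _ (hB.preimage continuous_subtype_val)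
  exact Subgroup.index_ne_zero_of_finite

theorem isCompactOpen_conjSubgroup (g : G) {U : Subgroup G} (hU : U.IsCompactOpen) :
    (conjSubgroup g U).IsCompactOpen := by
  let c := (Homeomorph.mulLeft g).trans (Homeomorph.mulRight g⁻¹)
  have hc : (conjSubgroup g U : Set G) = c '' U := by
    ext x
    simp [conjSubgroup, c]
  exact ⟨hc ▸ hU.1.image c.continuous, hc ▸ c.isOpenMap _ hU.2⟩

theorem indexRatio_pos {A B : Subgroup G} (hA : A.IsCompactOpen) (hB : B.IsCompactOpen) :
    0 < indexRatio A B := by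
  have hBA := Subgroup.relIndex_ne_zero_of_isCompact_of_isOpen hA.1 hB.2
  have hAB := Subgroup.relIndex_ne_zero_of_isCompact_of_isOpen hB.1 hA.2
  unfold indexRatio
  positivity

theorem indexRatio_conjSubgroup_self_eq (g : G) {U V : Subgroup G} (hU : U.IsCompactOpen)
    (hV : V.IsCompactOpen) :
    indexRatio (conjSubgroup g U) U = indexRatio (conjSubgroup g V) V := by
  have hUg := isCompactOpen_conjSubgroup g hU
  have hVg := isCompactOpen_conjSubgroup g hV
  set E := U ⊓ V ⊓ (conjSubgroup g U ⊓ conjSubgroup g V)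
  have hE : ∀ X : Subgroup G, X.IsCompactOpen → E.relIndex X ≠ 0 := fun X hX ↦ by
    have h {Y : Subgroup G} (hY : Y.IsCompactOpen) :=
      Subgroup.relIndex_ne_zero_of_isCompact_of_isOpen hX.1 hY.2
    exact Subgroup.relIndex_inf_ne_zero (Subgroup.relIndex_inf_ne_zero (h hU) (h hV))
      (Subgroup.relIndex_inf_ne_zero (h hUg) (h hVg))
  have hEU : E ≤ U := inf_le_left.trans inf_le_left
  have hEV : E ≤ V := inf_le_left.trans inf_le_right
  have hEUg : E ≤ conjSubgroup g U := inf_le_right.trans inf_le_left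
  have hEVg : E ≤ conjSubgroup g V := inf_le_right.trans inf_le_right
  have key := indexRatio_conjSubgroup g U V
  rw [indexRatio_eq_div_of_le_inf (le_inf hEUg hEVg) (hE _ hVg),
    indexRatio_eq_div_of_le_inf (le_inf hEU hEV) (hE _ hV)] at key
  rw [indexRatio_eq_div_of_le_inf (le_inf hEUg hEU) (hE _ hU),
    indexRatio_eq_div_of_le_inf (le_inf hEVg hEV) (hE _ hV)]
  field_simp [hE _ hU, hE _ hV, hE _ hUg, hE _ hVg] at key ⊢
  linarith

theorem relIndex_conjSubgroup_eq_indexRatio_mul (g : G) {U : Subgroup G}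
    (hU : U.IsCompactOpen) :
    (U.relIndex (conjSubgroup g U) : ℚ) =
      indexRatio (conjSubgroup g U) U * U.relIndex (conjSubgroup g⁻¹ U) := by
  have hUUg : (conjSubgroup g U).relIndex U ≠ 0 :=
    Subgroup.relIndex_ne_zero_of_isCompact_of_isOpen hU.1 (isCompactOpen_conjSubgroup g hU).2
  rw [relIndex_conjSubgroup_inv, indexRatio, div_mul_cancel₀ _ (by exact_mod_cast hUUg)]

theorem relIndex_conjSubgroup_le_iff_inv (g : G) {U V : Subgroup G} (hU : U.IsCompactOpen)
    (hV : V.IsCompactOpen) :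
    U.relIndex (conjSubgroup g U) ≤ V.relIndex (conjSubgroup g V) ↔
      U.relIndex (conjSubgroup g⁻¹ U) ≤ V.relIndex (conjSubgroup g⁻¹ V) := by
  rw [← Nat.cast_le (α := ℚ), ← Nat.cast_le (α := ℚ),
    relIndex_conjSubgroup_eq_indexRatio_mul g hU, relIndex_conjSubgroup_eq_indexRatio_mul g hV,
    indexRatio_conjSubgroup_self_eq g hU hV]
  exact mul_le_mul_iff_right₀ (indexRatio_pos (isCompactOpen_conjSubgroup g hV) hV)

end Topology

theorem scale_eq_relIndex_iff [Group G] [TopologicalSpace G] (g : G) {U : Subgroup G}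
    (hU : U.IsCompactOpen) :
    scale g = U.relIndex (conjSubgroup g U) ↔
      ∀ V : Subgroup G, V.IsCompactOpen →
        U.relIndex (conjSubgroup g U) ≤ V.relIndex (conjSubgroup g V) := by
  have hmem : U.relIndex (conjSubgroup g U) ∈
      { n : ℕ | ∃ U : Subgroup G, U.IsCompactOpen ∧ n = U.relIndex (conjSubgroup g U) } :=
    ⟨U, hU, rfl⟩
  refine ⟨fun h V hV ↦ h ▸ Nat.sInf_le ⟨V, hV, rfl⟩, fun h ↦ ?_⟩
  refine le_antisymm (Nat.sInf_le hmem) (le_csInf ⟨_, hmem⟩ ?_)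
  rintro _ ⟨V, hV, rfl⟩
  exact h V hV

theorem minimising_iff_minimising_inv_general
    [Group G] [TopologicalSpace G] [IsTopologicalGroup G]
    (g : G) (U : Subgroup G) (hU : U.IsCompactOpen) :
    scale g = U.relIndex (conjSubgroup g U) ↔ scale g⁻¹ = U.relIndex (conjSubgroup g⁻¹ U) := by
  rw [scale_eq_relIndex_iff g hU, scale_eq_relIndex_iff g⁻¹ hU]
  exact forall₂_congr fun V hV ↦ relIndex_conjSubgroup_le_iff_inv g hU hV

/-- `U` is minimising for `g` iff it is minimising for `g⁻¹`. -/
theorem minimising_iff_minimising_inv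
    [Group G] [TopologicalSpace G] [IsTopologicalGroup G] [LocallyCompactSpace G] [T2Space G]
    [TotallyDisconnectedSpace G]
    (g : G) (U : Subgroup G) (hU : U.IsCompactOpen) :
    scale g = U.relIndex (conjSubgroup g U) ↔ scale g⁻¹ = U.relIndex (conjSubgroup g⁻¹ U) :=
  minimising_iff_minimising_inv_general g U hU
end

section
/- Let G be a totally disconnected locally compact Hausdorff topological group. Then the set P(G) = {g ∈ G : the closure of the cyclic subgroup ⟨g⟩ is compact} of periodic elements is closed in G. -/
/-!
Fix a compact open subgroup `U` (van Dantzig) and write `U[a, b] = ⋂_{a ≤ j ≤ b} gʲ U g⁻ʲ`.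
The indices `[U[0, n] : U[0, n + 1]]` decrease in `n`, so they stabilise from some `N` on; a
Cantor-intersection argument then shows that `V = U[0, N]` factors as `V₋ V₊` with
`g V₋ g⁻¹ ⊆ V₋` and `g⁻¹ V₊ g ⊆ V₊` (Willis's tidying above). Hence `(g v)ᵏ ∈ V gᵏ V` for
`v ∈ V`. If `g` is a limit of periodic elements, some `g v` is periodic, so `(g v)ᵏ ∈ V` for
some `k > 0`; then `gᵏ ∈ V`, and `⟨g⟩` lies in the compact set `{1, g, …, gᵏ⁻¹} V`.
-/

open Set Pointwise

section Group

variable {G : Type*} [Group G]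

theorem Subgroup.coe_subset_mul_of_relIndex_eq {S X T : Subgroup G} (hSX : S ≤ X)
    (hX : T.relIndex X ≠ 0) (heq : T.relIndex S = T.relIndex X) :
    (X : Set G) ⊆ (S : Set G) * T := by
  intro x hx
  have := (T.subgroupOf X).fintypeOfIndexNeZero hX
  let e := Subgroup.quotientSubgroupOfEmbeddingOfLE T hSX
  have he : Function.Bijective e :=
    (Nat.bijective_iff_injective_and_card e).mpr ⟨e.injective, heq⟩
  obtain ⟨s', hs'⟩ := he.surjective (QuotientGroup.mk ⟨x, hx⟩)
  induction s' using QuotientGroup.induction_on with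
  | H s =>
    rw [Subgroup.quotientSubgroupOfEmbeddingOfLE_apply_mk, QuotientGroup.eq] at hs'
    exact ⟨s, s.2, (s : G)⁻¹ * x, by simpa [Subgroup.mem_subgroupOf] using hs', by group⟩

end Group

section TopologicalGroup

variable {G : Type*} [Group G] [TopologicalSpace G] [IsTopologicalGroup G]

theorem Subgroup.relIndex_ne_zero_of_isOpen_of_isCompact_s10 {T X : Subgroup G}
    (hT : IsOpen (T : Set G)) (hX : IsCompact (X : Set G)) : T.relIndex X ≠ 0 := by
  have : CompactSpace X := isCompact_iff_compactSpace.mp hX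
  have : Finite (X ⧸ T.subgroupOf X) :=
    (T.subgroupOf X).quotient_finite_of_isOpen (X.subgroupOf_isOpen T hT)
  exact Subgroup.index_ne_zero_of_finite

theorem exists_pow_mem_of_isCompact_closure_zpowers {H : Subgroup G} (hH : IsOpen (H : Set G))
    {h : G} (hh : IsCompact (closure (Subgroup.zpowers h : Set G))) :
    ∃ k : ℕ, 0 < k ∧ h ^ k ∈ H := by
  let K := (Subgroup.zpowers h).topologicalClosure
  have hK : H.relIndex K ≠ 0 := Subgroup.relIndex_ne_zero_of_isOpen_of_isCompact_s10 hH hh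
  obtain ⟨k, hk, -, hmem⟩ := Subgroup.exists_pow_mem_of_relIndex_ne_zero hK
    ((Subgroup.zpowers h).le_topologicalClosure (Subgroup.mem_zpowers h))
  exact ⟨k, hk, hmem.1⟩

theorem isCompact_closure_zpowers_of_pow_mem {V : Subgroup G} (hV : IsCompact (V : Set G))
    {g : G} {k : ℕ} (hk : 0 < k) (hgk : g ^ k ∈ V) :
    IsCompact (closure (Subgroup.zpowers g : Set G)) := by
  refine ((finite_Iio k).image (g ^ ·)).isCompact.mul hV |>.closure_of_subset ?_
  rintro _ ⟨n, rfl⟩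
  have hk' : (0 : ℤ) < k := by exact_mod_cast hk
  refine ⟨g ^ (n % k).toNat, ⟨(n % k).toNat, ?_, rfl⟩, (g ^ k) ^ (n / k), zpow_mem hgk _, ?_⟩
  · have := Int.emod_lt_of_pos n hk'
    simp only [mem_Iio]; omega
  · show g ^ _ * _ = g ^ n
    rw [← zpow_natCast, ← zpow_natCast, ← zpow_mul, ← zpow_add,
      Int.toNat_of_nonneg (Int.emod_nonneg n hk'.ne'), Int.emod_add_mul_ediv]

theorem mem_iInter_mul_iInter_of_forall_mem_mul {A B : ℕ → Set G} (hA : Antitone A)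
    (hB : Antitone B) (hAc : ∀ k, IsClosed (A k)) (hA₀ : IsCompact (A 0))
    (hBc : ∀ k, IsClosed (B k)) {x : G} (hx : ∀ k, x ∈ A k * B k) :
    x ∈ (⋂ k, A k) * ⋂ k, B k := by
  let E : ℕ → Set G := fun k => A k ∩ (· ⁻¹ * x) ⁻¹' B k
  have hE : (⋂ k, E k).Nonempty := by
    refine IsCompact.nonempty_iInter_of_sequence_nonempty_isCompact_isClosed E
      (fun k => inter_subset_inter (hA k.le_succ) (preimage_mono (hB k.le_succ)))
      (fun k => ?_) (hA₀.of_isClosed_subset ((hAc 0).inter ((hBc 0).preimage (by fun_prop)))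
        inter_subset_left)
      (fun k => (hAc k).inter ((hBc k).preimage (by fun_prop)))
    obtain ⟨a, ha, b, hb, rfl⟩ := hx k
    exact ⟨a, ha, by simpa using hb⟩
  obtain ⟨a, ha⟩ := hE
  simp only [E, mem_iInter, mem_inter_iff, mem_preimage] at ha
  exact ⟨a, mem_iInter.mpr fun k => (ha k).1, a⁻¹ * x, mem_iInter.mpr fun k => (ha k).2,
    mul_inv_cancel_left a x⟩

theorem exists_isCompact_isOpen_subgroup [LocallyCompactSpace G] [T2Space G]
    [TotallyDisconnectedSpace G] :
    ∃ U : Subgroup G, IsCompact (U : Set G) ∧ IsOpen (U : Set G) := by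
  obtain ⟨C, hC, hC1⟩ := exists_compact_mem_nhds (1 : G)
  obtain ⟨K, hKclopen, hK1, hKC⟩ := loc_compact_Haus_tot_disc_of_zero_dim.mem_nhds_iff.mp
    (interior_mem_nhds.mpr hC1)
  have hK : IsCompact K := hC.of_isClosed_subset hKclopen.isClosed (hKC.trans interior_subset)
  obtain ⟨V, hV, hVK⟩ := compact_open_separated_mul_left hK hKclopen.isOpen subset_rfl
  -- The stabiliser of `K` contains the neighbourhood `V ∩ V⁻¹` of `1` and, as `1 ∈ K`, lies in `K`.
  let U := MulAction.stabilizer G K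
  have hUopen : IsOpen (U : Set G) := by
    refine U.isOpen_of_mem_nhds (g := 1)
      (Filter.mem_of_superset (Filter.inter_mem hV (inv_mem_nhds_one G hV)) ?_)
    rintro x ⟨hx, hx'⟩
    exact (smul_set_subset_iff.mpr fun k hk => hVK (mul_mem_mul hx hk)).antisymm
      (subset_smul_set_iff.mpr (smul_set_subset_iff.mpr fun k hk => hVK (mul_mem_mul hx' hk)))
  have hUK : (U : Set G) ⊆ K := fun x (hx : x • K = K) => by
    have := smul_mem_smul_set (a := x) hK1
    rwa [hx, smul_eq_mul, mul_one] at this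
  exact ⟨U, hK.of_isClosed_subset (U.isClosed_of_isOpen hUopen) hUK, hUopen⟩

end TopologicalGroup

section ConjInf

variable {G : Type*} [Group G]

/-- `⋂_{j ∈ S} gʲ U g⁻ʲ`. -/
def conjInf (g : G) (U : Subgroup G) (S : Set ℤ) : Subgroup G :=
  ⨅ j ∈ S, U.comap (MulAut.conj (g ^ (-j))).toMonoidHom

variable {g x : G} {U : Subgroup G} {S T : Set ℤ}

theorem mem_conjInf : x ∈ conjInf g U S ↔ ∀ j ∈ S, (g ^ j)⁻¹ * x * g ^ j ∈ U := by
  simp only [conjInf, Subgroup.mem_iInf, Subgroup.mem_comap, MulEquiv.coe_toMonoidHom,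
    MulAut.conj_apply, zpow_neg, inv_inv]

theorem coe_conjInf :
    (conjInf g U S : Set G) = ⋂ j ∈ S, (fun x => (g ^ j)⁻¹ * x * g ^ j) ⁻¹' U := by
  ext x
  simp only [SetLike.mem_coe, mem_conjInf, mem_iInter, mem_preimage]

theorem conjInf_anti (h : S ⊆ T) : conjInf g U T ≤ conjInf g U S := fun _ hx =>
  mem_conjInf.mpr fun j hj => mem_conjInf.mp hx j (h hj)

theorem conjInf_inf_conjInf : conjInf g U S ⊓ conjInf g U T = conjInf g U (S ∪ T) := by
  ext x
  simp only [Subgroup.mem_inf, mem_conjInf, mem_union]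
  grind

theorem conjInf_le_conjInf_conjInf {R : Set ℤ} (h : S + T ⊆ R) :
    conjInf g U R ≤ conjInf g (conjInf g U T) S := fun x hx => by
  refine mem_conjInf.mpr fun i hi => mem_conjInf.mpr fun j hj => ?_
  simpa [zpow_add, mul_assoc] using mem_conjInf.mp hx (i + j) (h (add_mem_add hi hj))

theorem conj_zpow_mem_conjInf_iff (s : ℤ) :
    MulAut.conj (g ^ s) x ∈ conjInf g U S ↔ x ∈ conjInf g U ((· + s) ⁻¹' S) := by
  simp only [mem_conjInf, MulAut.conj_apply, mem_preimage]
  constructor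
  · intro h j hj
    convert h (j + s) hj using 1
    group
  · intro h j hj
    convert h (j - s) (by simpa using hj) using 1
    group

theorem comap_conj_zpow_conjInf (s : ℤ) :
    (conjInf g U S).comap (MulAut.conj (g ^ s)).toMonoidHom = conjInf g U ((· + s) ⁻¹' S) := by
  ext x
  exact conj_zpow_mem_conjInf_iff s

theorem relIndex_conjInf_preimage_add (s : ℤ) (S T : Set ℤ) :
    (conjInf g U ((· + s) ⁻¹' S)).relIndex (conjInf g U ((· + s) ⁻¹' T)) =
      (conjInf g U S).relIndex (conjInf g U T) := by
  rw [← comap_conj_zpow_conjInf, ← comap_conj_zpow_conjInf, Subgroup.relIndex_comap,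
    Subgroup.map_comap_eq_self_of_surjective (MulAut.conj (g ^ s)).surjective]

theorem conjInf_le_of_zero_mem (h : 0 ∈ S) : conjInf g U S ≤ U := fun x hx => by
  simpa using mem_conjInf.mp hx 0 h

variable [TopologicalSpace G] [IsTopologicalGroup G]

theorem isClosed_conjInf (hU : IsClosed (U : Set G)) : IsClosed (conjInf g U S : Set G) := by
  rw [coe_conjInf]
  exact isClosed_biInter fun j _ => hU.preimage (by fun_prop)

theorem isOpen_conjInf (hU : IsOpen (U : Set G)) (hS : S.Finite) :
    IsOpen (conjInf g U S : Set G) := by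
  rw [coe_conjInf]
  exact hS.isOpen_biInter fun j _ => hU.preimage (by fun_prop)

theorem isCompact_conjInf [T2Space G] (hU : IsCompact (U : Set G)) (hS : S.Nonempty) :
    IsCompact (conjInf g U S : Set G) := by
  obtain ⟨j, hj⟩ := hS
  refine (hU.image (f := fun u => g ^ j * u * (g ^ j)⁻¹) (by fun_prop)).of_isClosed_subset
    (isClosed_conjInf hU.isClosed) fun x hx => ?_
  exact ⟨_, mem_conjInf.mp hx j hj, by simp [mul_assoc]⟩

end ConjInf

section Tidying

variable {G : Type*} [Group G] {g : G} {U : Subgroup G}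

theorem relIndex_conjInf_Icc_add_one_left {a b : ℤ} (hab : a ≤ b) :
    (conjInf g U (Icc (a + 1) (b + 1))).relIndex (conjInf g U (Icc a b)) =
      (conjInf g U (Icc a (b + 1))).relIndex (conjInf g U (Icc a b)) := by
  rw [← Subgroup.inf_relIndex_right, conjInf_inf_conjInf]
  congr 2
  ext j
  simp only [mem_union, mem_Icc]
  omega

theorem relIndex_conjInf_Icc_add_eq (a : ℤ) (n : ℕ) :
    (conjInf g U (Icc a (a + n + 1))).relIndex (conjInf g U (Icc a (a + n))) =
      (conjInf g U (Icc 0 (n + 1))).relIndex (conjInf g U (Icc 0 n)) := by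
  have := relIndex_conjInf_preimage_add (g := g) (U := U) (-a) (Icc 0 (n + 1)) (Icc 0 n)
  simp only [preimage_add_const_Icc] at this
  convert this using 4 <;> ring

variable [TopologicalSpace G] [IsTopologicalGroup G]

theorem exists_conjInf_Icc_subset_mul [T2Space G] (hUo : IsOpen (U : Set G))
    (hUc : IsCompact (U : Set G)) :
    ∃ N : ℕ, ∀ a b : ℤ, a + N ≤ b → (conjInf g U (Icc a b) : Set G) ⊆
      conjInf g U (Icc (a - 1) b) * conjInf g U (Icc a (b + 1)) := by
  have hfin : ∀ a b c d : ℤ, c ≤ d →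
      (conjInf g U (Icc a b)).relIndex (conjInf g U (Icc c d)) ≠ 0 := fun a b c d hcd =>
    Subgroup.relIndex_ne_zero_of_isOpen_of_isCompact_s10 (isOpen_conjInf hUo (finite_Icc a b))
      (isCompact_conjInf hUc (nonempty_Icc.mpr hcd))
  -- Conjugating by `gᵃ` shows that `[U[a, a + n] : U[a, a + n + 1]]` does not depend on `a`.
  obtain ⟨r, hr⟩ : ∃ r : ℕ → ℕ, ∀ a : ℤ, ∀ n : ℕ,
      (conjInf g U (Icc a (a + n + 1))).relIndex (conjInf g U (Icc a (a + n))) = r n :=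
    ⟨_, relIndex_conjInf_Icc_add_eq⟩
  have hsucc : ∀ a : ℤ, ∀ n : ℕ,
      (conjInf g U (Icc (a + 1) (a + n + 1 + 1))).relIndex (conjInf g U (Icc a (a + n + 1))) =
        r (n + 1) := fun a n => by
    rw [relIndex_conjInf_Icc_add_one_left (by omega), ← hr a (n + 1)]
    push_cast
    ring_nf
  have hanti : Antitone r := antitone_nat_of_succ_le fun n => calc
    r (n + 1) = (conjInf g U (Icc (0 + 1) (0 + n + 1 + 1))).relIndex
        (conjInf g U (Icc 0 (0 + n + 1))) := (hsucc 0 n).symm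
    _ ≤ (conjInf g U (Icc (0 + 1) (0 + n + 1 + 1))).relIndex (conjInf g U (Icc 1 (0 + n + 1))) :=
      Subgroup.relIndex_le_of_le_right (conjInf_anti (Icc_subset_Icc (by omega) le_rfl))
        (hfin _ _ _ _ (by omega))
    _ = r n := by rw [← hr 1 n]; ring_nf
  refine ⟨Function.argmin r, fun a b hab => ?_⟩
  obtain ⟨n, hn, rfl⟩ : ∃ n : ℕ, Function.argmin r ≤ n ∧ b = a + n :=
    ⟨(b - a).toNat, by omega, by omega⟩
  have hstable : r (n + 1) = r n :=
    (hanti n.le_succ).antisymm ((hanti hn).trans (Function.argmin_le r (n + 1)))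
  refine Subgroup.coe_subset_mul_of_relIndex_eq (conjInf_anti (Icc_subset_Icc (by omega) le_rfl))
    (hfin _ _ _ _ (by omega)) ?_
  rw [hr, ← hstable, ← hsucc (a - 1) n]
  ring_nf

theorem conjInf_Icc_subset_mul_conjInf_Ici [T2Space G] (hU : IsCompact (U : Set G)) {N : ℕ}
    (hsplit : ∀ a b : ℤ, a + N ≤ b → (conjInf g U (Icc a b) : Set G) ⊆
      conjInf g U (Icc (a - 1) b) * conjInf g U (Icc a (b + 1)))
    {a b : ℤ} (hab : a + N ≤ b) :
    (conjInf g U (Icc a b) : Set G) ⊆ conjInf g U (Icc (a - 1) b) * conjInf g U (Ici a) := by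
  intro x hx
  have hk : ∀ k : ℕ, x ∈ (conjInf g U (Icc (a - 1) b) : Set G) * conjInf g U (Icc a (b + k)) := by
    intro k
    induction k with
    | zero => exact ⟨1, one_mem _, x, by simpa using hx, one_mul x⟩
    | succ k ih =>
      obtain ⟨y, hy, w, hw, rfl⟩ := ih
      obtain ⟨z, hz, w', hw', rfl⟩ := hsplit a (b + k) (by omega) hw
      refine ⟨y * z, mul_mem hy (conjInf_anti (Icc_subset_Icc le_rfl (by omega)) hz), w', ?_,
        mul_assoc y z w'⟩
      push_cast
      rwa [← add_assoc]
  have hlim := mem_iInter_mul_iInter_of_forall_mem_mul antitone_const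
    (fun _ _ hkl => conjInf_anti (Icc_subset_Icc le_rfl (by omega)))
    (fun _ => isClosed_conjInf hU.isClosed)
    (isCompact_conjInf hU (nonempty_Icc.mpr (by omega))) (fun _ => isClosed_conjInf hU.isClosed) hk
  refine mul_subset_mul (iInter_subset _ 0) (fun y hy => mem_conjInf.mpr fun j hj => ?_) hlim
  exact mem_conjInf.mp (mem_iInter.mp hy (j - b).toNat) j ⟨hj, by omega⟩

theorem conjInf_Icc_subset_conjInf_Iic_mul_conjInf_Ici [T2Space G] (hU : IsCompact (U : Set G))
    {N : ℕ} (hsplit : ∀ a b : ℤ, a + N ≤ b → (conjInf g U (Icc a b) : Set G) ⊆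
      conjInf g U (Icc (a - 1) b) * conjInf g U (Icc a (b + 1)))
    {a b : ℤ} (hab : a + N ≤ b) :
    (conjInf g U (Icc a b) : Set G) ⊆ conjInf g U (Iic b) * conjInf g U (Ici a) := by
  intro x hx
  have hm : ∀ m : ℕ, x ∈ (conjInf g U (Icc (a - m) b) : Set G) * conjInf g U (Ici a) := by
    intro m
    induction m with
    | zero => exact ⟨x, by simpa using hx, 1, one_mem _, mul_one x⟩
    | succ m ih =>
      obtain ⟨y, hy, w, hw, rfl⟩ := ih
      obtain ⟨z, hz, u, hu, rfl⟩ :=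
        conjInf_Icc_subset_mul_conjInf_Ici hU hsplit (a := a - m) (by omega) hy
      refine ⟨z, ?_, u * w, mul_mem (conjInf_anti (Ici_subset_Ici.mpr (by omega)) hu) hw,
        (mul_assoc z u w).symm⟩
      push_cast
      rwa [← sub_sub]
  have hlim := mem_iInter_mul_iInter_of_forall_mem_mul
    (fun _ _ hkl => conjInf_anti (Icc_subset_Icc (by omega) le_rfl)) antitone_const
    (fun _ => isClosed_conjInf hU.isClosed)
    (isCompact_conjInf hU (nonempty_Icc.mpr (by omega))) (fun _ => isClosed_conjInf hU.isClosed) hm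
  refine mul_subset_mul (fun y hy => mem_conjInf.mpr fun j hj => ?_) (iInter_subset _ 0) hlim
  exact mem_conjInf.mp (mem_iInter.mp hy (a - j).toNat) j ⟨by omega, hj⟩

end Tidying

section TidyAbove

variable {G : Type*} [Group G] {g v : G} {V : Subgroup G}

/-- Willis's condition `V = V₊ V₋` for `V₊ = ⋂_{j ≥ 0} gʲ V g⁻ʲ` and `V₋ = ⋂_{j ≤ 0} gʲ V g⁻ʲ`,
stated as `V ⊆ V₋ V₊`: this is equivalent, as `V = V⁻¹` and `⊇` always holds. -/
def IsTidyAbove (g : G) (V : Subgroup G) : Prop :=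
  (V : Set G) ⊆ conjInf g V (Iic 0) * conjInf g V (Ici 0)

theorem IsTidyAbove.exists_mul_pow_eq (hV : IsTidyAbove g V) (hv : v ∈ V) (k : ℕ) :
    ∃ w₁ ∈ V, ∃ w₂ ∈ V, (g * v) ^ k = w₁ * g ^ k * w₂ := by
  induction k with
  | zero => exact ⟨1, one_mem V, 1, one_mem V, by simp⟩
  | succ k ih =>
    obtain ⟨w₁, hw₁, w₂, hw₂, hk⟩ := ih
    obtain ⟨p, hp, q, hq, rfl⟩ := hV hw₂
    -- `g` contracts `conjInf g V (Iic 0)` and `g⁻¹` contracts `conjInf g V (Ici 0)`.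
    have hp' : MulAut.conj (g ^ (k : ℤ)) p ∈ conjInf g V (Iic 0) :=
      (conj_zpow_mem_conjInf_iff _).mpr <| conjInf_anti (fun j hj => by
        simp only [mem_preimage, mem_Iic] at hj ⊢; omega) hp
    have hq' : MulAut.conj (g ^ (-1 : ℤ)) q ∈ conjInf g V (Ici 0) :=
      (conj_zpow_mem_conjInf_iff _).mpr <| conjInf_anti (fun j hj => by
        simp only [mem_preimage, mem_Ici] at hj ⊢; omega) hq
    refine ⟨w₁ * MulAut.conj (g ^ (k : ℤ)) p,
      mul_mem hw₁ (conjInf_le_of_zero_mem self_mem_Iic hp'),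
      MulAut.conj (g ^ (-1 : ℤ)) q * v,
      mul_mem (conjInf_le_of_zero_mem self_mem_Ici hq') hv, ?_⟩
    rw [pow_succ, hk]
    simp only [MulAut.conj_apply]
    group

theorem IsTidyAbove.mul_pow_mem_iff (hV : IsTidyAbove g V) (hv : v ∈ V) (k : ℕ) :
    (g * v) ^ k ∈ V ↔ g ^ k ∈ V := by
  obtain ⟨w₁, hw₁, w₂, hw₂, hk⟩ := hV.exists_mul_pow_eq hv k
  rw [hk, Subgroup.mul_mem_cancel_right V hw₂, Subgroup.mul_mem_cancel_left V hw₁]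

variable [TopologicalSpace G] [IsTopologicalGroup G] [LocallyCompactSpace G] [T2Space G]
  [TotallyDisconnectedSpace G]

theorem exists_isCompact_isOpen_isTidyAbove (g : G) :
    ∃ V : Subgroup G, IsCompact (V : Set G) ∧ IsOpen (V : Set G) ∧ IsTidyAbove g V := by
  obtain ⟨U, hUc, hUo⟩ := exists_isCompact_isOpen_subgroup (G := G)
  obtain ⟨N, hsplit⟩ := exists_conjInf_Icc_subset_mul (g := g) hUo hUc
  refine ⟨conjInf g U (Icc 0 N), isCompact_conjInf hUc (nonempty_Icc.mpr (by omega)),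
    isOpen_conjInf hUo (finite_Icc 0 (N : ℤ)), ?_⟩
  refine (conjInf_Icc_subset_conjInf_Iic_mul_conjInf_Ici hUc hsplit (by omega)).trans
    (mul_subset_mul ?_ ?_)
  · refine conjInf_le_conjInf_conjInf ?_
    rintro _ ⟨i, hi, j, hj, rfl⟩
    simp only [mem_Iic, mem_Icc] at hi hj ⊢
    omega
  · refine conjInf_le_conjInf_conjInf ?_
    rintro _ ⟨i, hi, j, hj, rfl⟩
    simp only [mem_Ici, mem_Icc] at hi hj ⊢
    omega

end TidyAbove

/-- In a totally disconnected locally compact group, the set of periodic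
elements (those generating a relatively compact cyclic subgroup) is closed. -/
theorem isClosed_periodic_elements
    {G : Type*} [Group G] [TopologicalSpace G] [IsTopologicalGroup G] [LocallyCompactSpace G]
    [T2Space G] [TotallyDisconnectedSpace G] :
    IsClosed {g : G | IsCompact (closure ((Subgroup.zpowers g : Subgroup G) : Set G))} := by
  refine isClosed_of_closure_subset fun g hg => ?_
  obtain ⟨V, hVc, hVo, hV⟩ := exists_isCompact_isOpen_isTidyAbove g
  obtain ⟨_, ⟨v, hv, rfl⟩, hgv⟩ :=
    mem_closure_iff.mp hg _ (hVo.smul g) ⟨1, one_mem V, mul_one g⟩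
  obtain ⟨k, hk, hpow⟩ := exists_pow_mem_of_isCompact_closure_zpowers hVo hgv
  exact isCompact_closure_zpowers_of_pow_mem hVc hk ((hV.mul_pow_mem_iff hv k).mp hpow)
end

section
/- Let G be a locally compact Hausdorff topological group with a left-invariant Haar measure μ, and let f be a bicontinuous group automorphism of G that is ergodic with respect to μ. Then G is σ-compact. -/
open MeasureTheory

variable {G : Type*}

/-- An automorphism `f` is ergodic with respect to `μ` if every measurable set `E` with
`μ(f⁻¹(E) Δ E) = 0` satisfies `μ(E) = 0` or `μ(Eᶜ) = 0`. -/
def IsErgodicAut [Group G] [TopologicalSpace G] [MeasurableSpace G]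
    (μ : Measure G) (f : MulAut G) : Prop :=
  ∀ E : Set G, MeasurableSet E → μ (symmDiff (⇑f ⁻¹' E) E) = 0 → μ E = 0 ∨ μ Eᶜ = 0

/-! If `K` is a compact neighbourhood of `1`, the subgroup generated by the orbit `⋃ n, fⁿ(K)`
is open, σ-compact and `f`-invariant. An open subgroup is clopen, so it and its complement are
open, and a Haar measure charges every nonempty open set; ergodicity therefore forces the
subgroup to be all of `G`. -/

open Set

lemma IsSigmaCompact.union {X : Type*} [TopologicalSpace X] {s t : Set X}
    (hs : IsSigmaCompact s) (ht : IsSigmaCompact t) : IsSigmaCompact (s ∪ t) := by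
  rw [union_eq_iUnion]
  exact isSigmaCompact_iUnion _ fun b => by cases b <;> assumption

open Pointwise in
lemma IsSigmaCompact.submonoidClosure {M : Type*} [Monoid M] [TopologicalSpace M]
    [ContinuousMul M] {s : Set M} (hs : IsSigmaCompact s) :
    IsSigmaCompact (Submonoid.closure s : Set M) := by
  obtain ⟨K, hK, rfl⟩ := hs
  have hprod : ∀ w : List ℕ, IsCompact (w.map K).prod := by
    intro w
    induction w with
    | nil => exact isCompact_singleton
    | cons i w ih => exact (hK i).mul ih
  suffices (Submonoid.closure (⋃ i, K i) : Set M) = ⋃ w : List ℕ, (w.map K).prod from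
    this ▸ isSigmaCompact_iUnion_of_isCompact _ hprod
  refine Subset.antisymm (fun x hx => ?_) (iUnion_subset fun w => ?_)
  · induction hx using Submonoid.closure_induction_left with
    | one => exact mem_iUnion.2 ⟨[], mem_one.2 rfl⟩
    | mul_left x hx y _ hy =>
      obtain ⟨i, hi⟩ := mem_iUnion.1 hx
      obtain ⟨w, hw⟩ := mem_iUnion.1 hy
      exact mem_iUnion.2 ⟨i :: w, mul_mem_mul hi hw⟩
  · induction w with
    | nil => exact one_subset.2 (one_mem _)
    | cons i w ih =>
      exact mul_subset_iff.2 fun a ha b hb =>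
        mul_mem (Submonoid.subset_closure (mem_iUnion_of_mem i ha)) (ih hb)

lemma IsSigmaCompact.subgroupClosure [Group G] [TopologicalSpace G] [ContinuousMul G]
    [ContinuousInv G] {s : Set G} (hs : IsSigmaCompact s) :
    IsSigmaCompact (Subgroup.closure s : Set G) := by
  rw [← Subgroup.coe_toSubmonoid, Subgroup.closure_toSubmonoid, ← image_inv_eq_inv]
  exact (hs.union (hs.image continuous_inv)).submonoidClosure

namespace MulAut

lemma continuous_pow [Group G] [TopologicalSpace G] {f : MulAut G} (hf : Continuous f)
    (n : ℕ) : Continuous ⇑(f ^ n) := by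
  induction n with
  | zero => exact continuous_id
  | succ n ih => rw [pow_succ, coe_mul]; exact ih.comp hf

lemma continuous_zpow [Group G] [TopologicalSpace G] {f : MulAut G} (hf : Continuous f)
    (hf' : Continuous f.symm) (n : ℤ) : Continuous ⇑(f ^ n) := by
  cases n with
  | ofNat m => exact continuous_pow hf m
  | negSucc m => rw [zpow_negSucc, ← inv_pow]; exact continuous_pow (f := f⁻¹) hf' (m + 1)

lemma preimage_iUnion_zpow_image [Group G] (f : MulAut G) (K : Set G) :
    ⇑f ⁻¹' ⋃ n : ℤ, ⇑(f ^ n) '' K = ⋃ n : ℤ, ⇑(f ^ n) '' K := by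
  ext x
  simp only [mem_preimage, mem_iUnion, mem_image]
  constructor
  · rintro ⟨n, k, hk, hkx⟩
    exact ⟨-1 + n, k, hk, by
      rw [zpow_add, zpow_neg_one, coe_mul, Function.comp_apply, hkx, inv_apply_self]⟩
  · rintro ⟨n, k, hk, rfl⟩
    exact ⟨1 + n, k, hk, by rw [zpow_one_add, coe_mul, Function.comp_apply]⟩

end MulAut

lemma Subgroup.closure_preimage_mulEquiv {N : Type*} [Group G] [Group N] (f : G ≃* N)
    (s : Set N) : Subgroup.closure (f ⁻¹' s) = (Subgroup.closure s).comap f := by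
  rw [Subgroup.comap_equiv_eq_map_symm, MonoidHom.map_closure, MonoidHom.coe_coe]
  exact congrArg _ (f.toEquiv.image_symm_eq_preimage s).symm

lemma MulAut.exists_isOpen_isSigmaCompact_subgroup_preimage_eq [Group G]
    [TopologicalSpace G] [IsTopologicalGroup G] [WeaklyLocallyCompactSpace G] {f : MulAut G}
    (hf : Continuous f) (hf' : Continuous f.symm) :
    ∃ H : Subgroup G,
      IsOpen (H : Set G) ∧ IsSigmaCompact (H : Set G) ∧ ⇑f ⁻¹' H = H := by
  obtain ⟨K, hK, hK1⟩ := exists_compact_mem_nhds (1 : G)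
  set S := ⋃ n : ℤ, ⇑(f ^ n) '' K
  have hKS : K ⊆ S := fun x hx => mem_iUnion.2 ⟨0, x, hx, rfl⟩
  refine ⟨Subgroup.closure S, ?_, ?_, ?_⟩
  · exact Subgroup.isOpen_of_mem_nhds _
      (Filter.mem_of_superset hK1 (hKS.trans Subgroup.subset_closure))
  · exact (isSigmaCompact_iUnion_of_isCompact _
      fun n => hK.image (MulAut.continuous_zpow hf hf' n)).subgroupClosure
  · have := congrArg SetLike.coe (Subgroup.closure_preimage_mulEquiv f S)
    rwa [f.preimage_iUnion_zpow_image, eq_comm] at this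

lemma IsErgodicAut.eq_top_of_isOpen [Group G] [TopologicalSpace G] [SeparatelyContinuousMul G]
    [MeasurableSpace G] [OpensMeasurableSpace G] {μ : Measure G} [μ.IsOpenPosMeasure]
    {f : MulAut G} (herg : IsErgodicAut μ f) {H : Subgroup G} (hH : IsOpen (H : Set G))
    (hfH : ⇑f ⁻¹' H = H) : H = ⊤ := by
  have hsymmDiff : μ (symmDiff (⇑f ⁻¹' H) H) = 0 := by
    rw [hfH, symmDiff_self]
    exact measure_empty
  rcases herg H hH.measurableSet hsymmDiff with hnull | hconull
  · exact absurd hnull (hH.measure_ne_zero μ ⟨1, H.one_mem⟩)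
  · rw [← Subgroup.coe_eq_univ, ← (H.isClosed_of_isOpen hH).ae_eq_univ_iff_eq (μ := μ)]
    exact ae_eq_univ.2 hconull

theorem sigmaCompact_of_ergodic_automorphism_general
    [Group G] [TopologicalSpace G] [IsTopologicalGroup G] [LocallyCompactSpace G]
    [MeasurableSpace G] [BorelSpace G]
    (μ : Measure G) [μ.IsHaarMeasure]
    (f : MulAut G) (hf : Continuous f) (hf' : Continuous f.symm)
    (herg : IsErgodicAut μ f) :
    SigmaCompactSpace G := by
  obtain ⟨H, hH_open, hH_sigma, hfH⟩ :=
    f.exists_isOpen_isSigmaCompact_subgroup_preimage_eq hf hf'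
  rw [← isSigmaCompact_univ_iff, ← Subgroup.coe_top, ← herg.eq_top_of_isOpen hH_open hfH]
  exact hH_sigma

/-- A locally compact group with an ergodic bicontinuous automorphism is
σ-compact. -/
theorem sigmaCompact_of_ergodic_automorphism
    [Group G] [TopologicalSpace G] [IsTopologicalGroup G] [LocallyCompactSpace G] [T2Space G]
    [MeasurableSpace G] [BorelSpace G]
    (μ : Measure G) [μ.IsHaarMeasure]
    (f : MulAut G) (hf : Continuous f) (hf' : Continuous f.symm)
    (herg : IsErgodicAut μ f) :
    SigmaCompactSpace G :=
  sigmaCompact_of_ergodic_automorphism_general μ f hf hf' herg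
end
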